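/- Contraction differential inequality for the reflection-coupling Lyapunov function: With β > 0, the piecewise rate function γ (γ(r) = K₁r for r ≤ R, γ(r) = (−((K₁+K₂)/R)(r−R)+K₁)r for R ≤ r ≤ 2R, γ(r) = −K₂ r for r > 2R, where R > 0, K₁ ≥ 0, K₂ > 0), δ := ∫₀^∞ s e^{(1/(2β))∫₀ˢ γ(v)dv} ds, and f(r) = ∫₀ʳ e^{−(1/(2β))∫₀ᵘ γ(v)dv} ( ∫_u^∞ s e^{(1/(2β))∫₀ˢ γ(v)dv} ds ) du, the following holds: for any constant κ ≥ 0 and every r ≥ 0, f′(r) γ(r) + κ f′(r) r + 2β f″(r) ≤ −λ₀ f(r), where λ₀ := 2β/δ − (K₂ δ/(2β)) κ. -/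

import Mathlib

/-
Write `E(s) = exp ((1/(2β)) ∫₀ˢ γ)` and `g = f'`, so that `g(u) = E(u)⁻¹ ∫_u^∞ s E(s) ds` and
`2β g' = -γ g - 2β u`; the left-hand side of the inequality is therefore `κ r g(r) - 2β r`.
Since `-γ E = (-2β E)'` and `E → 0`, comparing `s` with a multiple of `-γ(s)` under the tail
integral bounds `g`: the lower bound `γ(s) ≥ -K₂ s` gives `g ≥ 2β/K₂`, and the monotonicity of
`γ(s)/s` gives `-γ(u) g(u) ≤ 2β u`, i.e. `g' ≤ 0`, whence `g ≤ g(0) = δ`. Integrating,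
`(2β/K₂) r ≤ f(r) ≤ δ r`, and these two bounds turn `κ r g(r) - 2β r` into `-λ₀ f(r)`.
For the piecewise rate, `γ(r)/r` is a decreasing affine function clamped to `[-K₂, K₁]`, which
yields all the properties of `γ` used above.
-/

open MeasureTheory Real

/-- The piecewise partially dissipative rate function `γ`. -/
noncomputable def rateGamma (R K₁ K₂ : ℝ) (r : ℝ) : ℝ :=
  if r ≤ R then K₁ * r
  else if r ≤ 2 * R then (-((K₁ + K₂) / R) * (r - R) + K₁) * r
  else -K₂ * r

/-- The constant `δ = ∫₀^∞ s e^{(1/(2β)) ∫₀ˢ γ(v) dv} ds`. -/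
noncomputable def deltaConst (β R K₁ K₂ : ℝ) : ℝ :=
  ∫ s in Set.Ioi (0:ℝ),
    s * Real.exp ((1 / (2 * β)) * ∫ v in (0:ℝ)..s, rateGamma R K₁ K₂ v)

/-- The coupling distance function
`f(r) = ∫₀ʳ e^{−(1/(2β))∫₀ᵘ γ} (∫_u^∞ s e^{(1/(2β))∫₀ˢ γ} ds) du`. -/
noncomputable def couplingF (β R K₁ K₂ : ℝ) (r : ℝ) : ℝ :=
  ∫ u in (0:ℝ)..r,
    Real.exp (-(1 / (2 * β)) * ∫ v in (0:ℝ)..u, rateGamma R K₁ K₂ v) *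
      ∫ s in Set.Ioi u,
        s * Real.exp ((1 / (2 * β)) * ∫ v in (0:ℝ)..s, rateGamma R K₁ K₂ v)

open Set Filter Topology

/- `couplingF β R K₁ K₂ r` unfolds to `∫ u in 0..r, couplingDeriv β (rateGamma R K₁ K₂) u` and
`deltaConst β R K₁ K₂` to `tailIntegral β (rateGamma R K₁ K₂) 0`. -/
noncomputable def expPrimitive (β : ℝ) (γ : ℝ → ℝ) (s : ℝ) : ℝ :=
  Real.exp ((1 / (2 * β)) * ∫ v in (0:ℝ)..s, γ v)

noncomputable def tailIntegral (β : ℝ) (γ : ℝ → ℝ) (u : ℝ) : ℝ :=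
  ∫ s in Ioi u, s * expPrimitive β γ s

noncomputable def couplingDeriv (β : ℝ) (γ : ℝ → ℝ) (u : ℝ) : ℝ :=
  Real.exp (-(1 / (2 * β)) * ∫ v in (0:ℝ)..u, γ v) * tailIntegral β γ u

theorem Continuous.integrableOn_Ioi_of_integrableOn_Ioi {f : ℝ → ℝ} (hf : Continuous f) {a : ℝ}
    (ha : IntegrableOn f (Ioi a)) (u : ℝ) : IntegrableOn f (Ioi u) :=
  (integrableOn_Ici_iff_integrableAtFilter_atTop.2
    ⟨⟨Ioi a, Ioi_mem_atTop a, ha⟩, hf.locallyIntegrable.locallyIntegrableOn _⟩).mono_set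
    Ioi_subset_Ici_self

section CouplingDeriv

variable {β : ℝ} {γ : ℝ → ℝ}

theorem expPrimitive_pos (s : ℝ) : 0 < expPrimitive β γ s := Real.exp_pos _

theorem continuous_expPrimitive (hγ : Continuous γ) : Continuous (expPrimitive β γ) :=
  (continuous_const.mul (intervalIntegral.continuous_primitive (hγ.intervalIntegrable) 0)).rexp

theorem hasDerivAt_expPrimitive (hγ : Continuous γ) (hβ : β ≠ 0) (s : ℝ) :
    HasDerivAt (fun s => 2 * β * expPrimitive β γ s) (γ s * expPrimitive β γ s) s := by
  have h := ((((hγ.integral_hasStrictDerivAt 0 s).hasDerivAt).const_mul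
    (1 / (2 * β))).exp).const_mul (2 * β)
  refine h.congr_deriv ?_
  simp only [expPrimitive]
  field_simp

theorem primitive_sub_le_of_le_neg_mul (hγ : Continuous γ) {K a s : ℝ} (has : a ≤ s)
    (hdiss : ∀ v ≥ a, γ v ≤ -K * v) :
    (∫ v in (0:ℝ)..s, γ v) - ∫ v in (0:ℝ)..a, γ v ≤ -K / 2 * (s ^ 2 - a ^ 2) := by
  rw [intervalIntegral.integral_interval_sub_left (hγ.intervalIntegrable _ _)
    (hγ.intervalIntegrable _ _)]
  calc ∫ v in a..s, γ v ≤ ∫ v in a..s, -K * v :=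
        intervalIntegral.integral_mono_on has (hγ.intervalIntegrable _ _)
          ((by fun_prop : Continuous fun v : ℝ => -K * v).intervalIntegrable _ _)
          fun v hv => hdiss v hv.1
    _ = -K / 2 * (s ^ 2 - a ^ 2) := by
        rw [intervalIntegral.integral_const_mul, integral_id]; ring

theorem tendsto_expPrimitive_atTop (hγ : Continuous γ) (hβ : 0 < β) {K a : ℝ} (hK : 0 < K)
    (hdiss : ∀ v ≥ a, γ v ≤ -K * v) : Tendsto (expPrimitive β γ) atTop (𝓝 0) := by
  have hquad : Tendsto (fun s : ℝ => 1 / (2 * β) *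
      ((∫ v in (0:ℝ)..a, γ v) + -K / 2 * (s ^ 2 - a ^ 2))) atTop atBot :=
    (tendsto_atBot_add_const_left _ _ (((tendsto_pow_atTop two_ne_zero).atTop_add
      tendsto_const_nhds).const_mul_atTop_of_neg (by linarith))).const_mul_atBot (by positivity)
  refine Real.tendsto_exp_atBot.comp (tendsto_atBot_mono' _ ?_ hquad)
  filter_upwards [eventually_ge_atTop a] with s hs
  have := primitive_sub_le_of_le_neg_mul hγ hs hdiss
  exact mul_le_mul_of_nonneg_left (by linarith) (by positivity)

theorem integrableOn_rate_mul_expPrimitive (hγ : Continuous γ) (hβ : 0 < β) {K a : ℝ}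
    (hK : 0 < K) (hdiss : ∀ v ≥ a, γ v ≤ -K * v) (u : ℝ) :
    IntegrableOn (fun s => γ s * expPrimitive β γ s) (Ioi u) := by
  have hE := tendsto_expPrimitive_atTop hγ hβ hK hdiss
  have htail : IntegrableOn (fun s => -(γ s * expPrimitive β γ s)) (Ioi (max a 0)) := by
    refine integrableOn_Ioi_deriv_of_nonneg' (g := fun s => -(2 * β * expPrimitive β γ s))
      (fun s _ => (hasDerivAt_expPrimitive hγ hβ.ne' s).neg) (fun s hs => ?_)
      (by simpa using (hE.const_mul (2 * β)).neg)
    have hs' : a ≤ s ∧ 0 ≤ s := max_le_iff.1 (le_of_lt hs)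
    exact neg_nonneg.2 (mul_nonpos_of_nonpos_of_nonneg (by nlinarith [hdiss s hs'.1])
      (expPrimitive_pos s).le)
  exact Continuous.integrableOn_Ioi_of_integrableOn_Ioi (f := fun s => γ s * expPrimitive β γ s)
    (hγ.mul (continuous_expPrimitive hγ)) (by simpa using htail.neg) u

theorem integrableOn_mul_expPrimitive (hγ : Continuous γ) (hβ : 0 < β) {K a : ℝ}
    (hK : 0 < K) (hdiss : ∀ v ≥ a, γ v ≤ -K * v) (u : ℝ) :
    IntegrableOn (fun s => s * expPrimitive β γ s) (Ioi u) := by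
  have hcont : Continuous fun s => s * expPrimitive β γ s :=
    continuous_id.mul (continuous_expPrimitive hγ)
  refine hcont.integrableOn_Ioi_of_integrableOn_Ioi (a := max a 0) ?_ u
  refine ((integrableOn_rate_mul_expPrimitive hγ hβ hK hdiss _).neg.div_const K).mono'
    hcont.aestronglyMeasurable.restrict ?_
  refine (ae_restrict_iff' measurableSet_Ioi).2 (Eventually.of_forall fun s hs => ?_)
  have hs' : a ≤ s ∧ 0 ≤ s := max_le_iff.1 (le_of_lt hs)
  have hE := expPrimitive_pos (β := β) (γ := γ) s
  rw [Real.norm_of_nonneg (mul_nonneg hs'.2 hE.le), Pi.neg_apply, le_div_iff₀ hK]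
  nlinarith [mul_le_mul_of_nonneg_right (hdiss s hs'.1) hE.le]

theorem hasDerivAt_tailIntegral (hγ : Continuous γ) (hβ : 0 < β) {K a : ℝ}
    (hK : 0 < K) (hdiss : ∀ v ≥ a, γ v ≤ -K * v) (u : ℝ) :
    HasDerivAt (tailIntegral β γ) (-(u * expPrimitive β γ u)) u := by
  have hcont : Continuous fun s => s * expPrimitive β γ s :=
    continuous_id.mul (continuous_expPrimitive hγ)
  have heq : tailIntegral β γ
      = fun w => tailIntegral β γ 0 - ∫ s in (0:ℝ)..w, s * expPrimitive β γ s := by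
    funext w
    rw [← intervalIntegral.integral_Ioi_sub_Ioi' (integrableOn_mul_expPrimitive hγ hβ hK hdiss 0)
      (integrableOn_mul_expPrimitive hγ hβ hK hdiss w)]
    exact (sub_sub_cancel _ _).symm
  rw [heq]
  exact ((hcont.integral_hasStrictDerivAt 0 u).hasDerivAt).const_sub _

theorem exp_neg_mul_expPrimitive (u : ℝ) :
    Real.exp (-(1 / (2 * β)) * ∫ v in (0:ℝ)..u, γ v) * expPrimitive β γ u = 1 := by
  rw [expPrimitive, ← Real.exp_add, neg_mul, neg_add_cancel, Real.exp_zero]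

theorem couplingDeriv_mul_expPrimitive (u : ℝ) :
    couplingDeriv β γ u * expPrimitive β γ u = tailIntegral β γ u := by
  rw [couplingDeriv, mul_right_comm, exp_neg_mul_expPrimitive, one_mul]

theorem couplingDeriv_zero : couplingDeriv β γ 0 = tailIntegral β γ 0 := by
  simp [couplingDeriv]

theorem couplingDeriv_nonneg {u : ℝ} (hu : 0 ≤ u) : 0 ≤ couplingDeriv β γ u :=
  mul_nonneg (Real.exp_pos _).le <| setIntegral_nonneg measurableSet_Ioi fun s hs =>
    mul_nonneg (hu.trans hs.out.le) (expPrimitive_pos s).le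

theorem hasDerivAt_couplingDeriv (hγ : Continuous γ) (hβ : 0 < β) {K a : ℝ}
    (hK : 0 < K) (hdiss : ∀ v ≥ a, γ v ≤ -K * v) (u : ℝ) :
    HasDerivAt (couplingDeriv β γ) (-(γ u * couplingDeriv β γ u) / (2 * β) - u) u := by
  have hexp := (((hγ.integral_hasStrictDerivAt 0 u).hasDerivAt).const_mul
    (-(1 / (2 * β)))).exp
  refine (hexp.mul (hasDerivAt_tailIntegral hγ hβ hK hdiss u)).congr_deriv ?_
  have h1 := exp_neg_mul_expPrimitive (β := β) (γ := γ) u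
  rw [couplingDeriv]
  set e := Real.exp (-(1 / (2 * β)) * ∫ v in (0:ℝ)..u, γ v)
  field_simp
  linear_combination (-(2 * β) * u) * h1

theorem integral_Ioi_mul_neg_rate_mul_expPrimitive (hγ : Continuous γ) (hβ : 0 < β) {K a : ℝ}
    (hK : 0 < K) (hdiss : ∀ v ≥ a, γ v ≤ -K * v) (u m : ℝ) :
    ∫ s in Ioi u, m * -γ s * expPrimitive β γ s = 2 * β * m * expPrimitive β γ u := by
  have hftc := integral_Ioi_of_hasDerivAt_of_tendsto'
    (fun s _ => hasDerivAt_expPrimitive hγ hβ.ne' s)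
    (integrableOn_rate_mul_expPrimitive hγ hβ hK hdiss u)
    (by simpa using (tendsto_expPrimitive_atTop hγ hβ hK hdiss).const_mul (2 * β))
  simp_rw [mul_assoc, neg_mul, integral_const_mul, integral_neg, hftc]
  ring

theorem couplingDeriv_le_of_le_mul_neg_rate (hγ : Continuous γ) (hβ : 0 < β) {K a : ℝ}
    (hK : 0 < K) (hdiss : ∀ v ≥ a, γ v ≤ -K * v) {u m : ℝ} (h : ∀ s > u, s ≤ m * -γ s) :
    couplingDeriv β γ u ≤ 2 * β * m := by
  refine le_of_mul_le_mul_right ?_ (expPrimitive_pos (β := β) (γ := γ) u)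
  rw [couplingDeriv_mul_expPrimitive, tailIntegral,
    ← integral_Ioi_mul_neg_rate_mul_expPrimitive hγ hβ hK hdiss]
  refine setIntegral_mono_on (integrableOn_mul_expPrimitive hγ hβ hK hdiss u) ?_
    measurableSet_Ioi fun s hs => mul_le_mul_of_nonneg_right (h s hs) (expPrimitive_pos s).le
  simpa only [IntegrableOn, mul_assoc, neg_mul, mul_neg] using
    (integrableOn_rate_mul_expPrimitive hγ hβ hK hdiss u).const_mul (-m)

theorem le_couplingDeriv_of_mul_neg_rate_le (hγ : Continuous γ) (hβ : 0 < β) {K a : ℝ}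
    (hK : 0 < K) (hdiss : ∀ v ≥ a, γ v ≤ -K * v) {u m : ℝ} (h : ∀ s > u, m * -γ s ≤ s) :
    2 * β * m ≤ couplingDeriv β γ u := by
  refine le_of_mul_le_mul_right ?_ (expPrimitive_pos (β := β) (γ := γ) u)
  rw [couplingDeriv_mul_expPrimitive, tailIntegral,
    ← integral_Ioi_mul_neg_rate_mul_expPrimitive hγ hβ hK hdiss]
  refine setIntegral_mono_on ?_ (integrableOn_mul_expPrimitive hγ hβ hK hdiss u)
    measurableSet_Ioi fun s hs => mul_le_mul_of_nonneg_right (h s hs) (expPrimitive_pos s).le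
  simpa only [IntegrableOn, mul_assoc, neg_mul, mul_neg] using
    (integrableOn_rate_mul_expPrimitive hγ hβ hK hdiss u).const_mul (-m)

theorem le_couplingDeriv (hγ : Continuous γ) (hβ : 0 < β) {K a : ℝ}
    (hK : 0 < K) (hdiss : ∀ v ≥ a, γ v ≤ -K * v) {K' u : ℝ} (hK' : 0 < K')
    (hlow : ∀ v ≥ u, -K' * v ≤ γ v) :
    2 * β / K' ≤ couplingDeriv β γ u := by
  have h := le_couplingDeriv_of_mul_neg_rate_le hγ hβ hK hdiss (m := 1 / K') fun s hs => by
    rw [one_div_mul_eq_div, div_le_iff₀ hK']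
    linarith [hlow s hs.le]
  rwa [mul_one_div] at h

theorem neg_rate_mul_couplingDeriv_le (hγ : Continuous γ) (hβ : 0 < β) {K a : ℝ}
    (hK : 0 < K) (hdiss : ∀ v ≥ a, γ v ≤ -K * v)
    (hratio : AntitoneOn (fun s => γ s / s) (Ioi 0)) {x : ℝ} (hx : 0 < x) (hγx : γ x < 0) :
    -γ x * couplingDeriv β γ x ≤ 2 * β * x := by
  have hγx' : 0 < -γ x := neg_pos.2 hγx
  have h := couplingDeriv_le_of_le_mul_neg_rate hγ hβ hK hdiss (m := x / -γ x) fun s hs => by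
    have hs₀ : 0 < s := hx.trans hs
    have h := hratio hx hs₀ hs.le
    rw [div_le_div_iff₀ hs₀ hx] at h
    rw [div_mul_eq_mul_div, le_div_iff₀ hγx']
    linarith
  calc -γ x * couplingDeriv β γ x ≤ -γ x * (2 * β * (x / -γ x)) :=
        mul_le_mul_of_nonneg_left h hγx'.le
    _ = 2 * β * x := by field_simp [hγx.ne]

theorem antitoneOn_couplingDeriv (hγ : Continuous γ) (hβ : 0 < β) {K a : ℝ}
    (hK : 0 < K) (hdiss : ∀ v ≥ a, γ v ≤ -K * v)
    (hratio : AntitoneOn (fun s => γ s / s) (Ioi 0)) :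
    AntitoneOn (couplingDeriv β γ) (Ici 0) := by
  have hderiv := hasDerivAt_couplingDeriv hγ hβ hK hdiss
  refine antitoneOn_of_deriv_nonpos (convex_Ici 0)
    (fun x _ => (hderiv x).continuousAt.continuousWithinAt)
    (fun x _ => (hderiv x).differentiableAt.differentiableWithinAt) fun x hx => ?_
  rw [interior_Ici] at hx
  rw [(hderiv x).deriv, sub_nonpos, div_le_iff₀ (by positivity)]
  rcases le_or_gt 0 (γ x) with hγx | hγx
  · nlinarith [mul_nonneg hγx (couplingDeriv_nonneg (β := β) (γ := γ) hx.out.le), hx.out]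
  · linarith [neg_rate_mul_couplingDeriv_le hγ hβ hK hdiss hratio hx hγx]

theorem continuous_couplingDeriv (hγ : Continuous γ) (hβ : 0 < β) {K a : ℝ}
    (hK : 0 < K) (hdiss : ∀ v ≥ a, γ v ≤ -K * v) : Continuous (couplingDeriv β γ) :=
  continuous_iff_continuousAt.2 fun u => (hasDerivAt_couplingDeriv hγ hβ hK hdiss u).continuousAt

theorem couplingDeriv_le_tailIntegral_zero (hγ : Continuous γ) (hβ : 0 < β) {K a : ℝ}
    (hK : 0 < K) (hdiss : ∀ v ≥ a, γ v ≤ -K * v)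
    (hratio : AntitoneOn (fun s => γ s / s) (Ioi 0)) {u : ℝ} (hu : 0 ≤ u) :
    couplingDeriv β γ u ≤ tailIntegral β γ 0 :=
  couplingDeriv_zero (β := β) (γ := γ) ▸
    antitoneOn_couplingDeriv hγ hβ hK hdiss hratio self_mem_Ici hu hu

theorem mul_le_integral_couplingDeriv (hγ : Continuous γ) (hβ : 0 < β) {K a : ℝ}
    (hK : 0 < K) (hdiss : ∀ v ≥ a, γ v ≤ -K * v) {K' : ℝ} (hK' : 0 < K')
    (hlow : ∀ v ≥ 0, -K' * v ≤ γ v) {r : ℝ} (hr : 0 ≤ r) :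
    2 * β / K' * r ≤ ∫ u in (0:ℝ)..r, couplingDeriv β γ u := by
  have h := intervalIntegral.integral_mono_on hr intervalIntegrable_const
    ((continuous_couplingDeriv hγ hβ hK hdiss).intervalIntegrable (μ := volume) 0 r)
    fun u hu => le_couplingDeriv hγ hβ hK hdiss hK' fun v hv => hlow v (hu.1.trans hv)
  rwa [intervalIntegral.integral_const, sub_zero, smul_eq_mul, mul_comm] at h

theorem integral_couplingDeriv_le (hγ : Continuous γ) (hβ : 0 < β) {K a : ℝ}
    (hK : 0 < K) (hdiss : ∀ v ≥ a, γ v ≤ -K * v)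
    (hratio : AntitoneOn (fun s => γ s / s) (Ioi 0)) {r : ℝ} (hr : 0 ≤ r) :
    ∫ u in (0:ℝ)..r, couplingDeriv β γ u ≤ tailIntegral β γ 0 * r := by
  have h := intervalIntegral.integral_mono_on hr
    ((continuous_couplingDeriv hγ hβ hK hdiss).intervalIntegrable (μ := volume) 0 r)
    intervalIntegrable_const
    fun u hu => couplingDeriv_le_tailIntegral_zero hγ hβ hK hdiss hratio hu.1
  rwa [intervalIntegral.integral_const, sub_zero, smul_eq_mul, mul_comm] at h

end CouplingDeriv

section RateGamma

variable {R K₁ K₂ : ℝ}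

theorem rateGamma_eq_mul_clamp (hR : 0 < R) (hK : 0 ≤ K₁ + K₂) (r : ℝ) :
    rateGamma R K₁ K₂ r = r * max (-K₂) (min K₁ (-((K₁ + K₂) / R) * (r - R) + K₁)) := by
  have hslope : 0 ≤ (K₁ + K₂) / R := div_nonneg hK hR.le
  unfold rateGamma
  split_ifs with h₁ h₂
  · rw [min_eq_left (by nlinarith), max_eq_right (by linarith), mul_comm]
  · have hmid : (K₁ + K₂) / R * (r - R) ≤ K₁ + K₂ := by
      rw [div_mul_eq_mul_div, div_le_iff₀ hR]; nlinarith
    rw [min_eq_right (by nlinarith), max_eq_right (by linarith), mul_comm]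
  · have hbig : K₁ + K₂ ≤ (K₁ + K₂) / R * (r - R) := by
      rw [div_mul_eq_mul_div, le_div_iff₀ hR]; nlinarith
    rw [max_eq_left (min_le_of_right_le (by linarith))]
    ring

theorem continuous_rateGamma (hR : 0 < R) (hK : 0 ≤ K₁ + K₂) :
    Continuous (rateGamma R K₁ K₂) := by
  simp only [funext (rateGamma_eq_mul_clamp hR hK)]
  fun_prop

theorem neg_mul_le_rateGamma (hR : 0 < R) (hK : 0 ≤ K₁ + K₂) {v : ℝ} (hv : 0 ≤ v) :
    -K₂ * v ≤ rateGamma R K₁ K₂ v := by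
  rw [rateGamma_eq_mul_clamp hR hK, mul_comm]
  exact mul_le_mul_of_nonneg_left (le_max_left _ _) hv

theorem rateGamma_le_neg_mul (hR : 0 < R) (hK : 0 ≤ K₁ + K₂) {v : ℝ} (hv : 2 * R ≤ v) :
    rateGamma R K₁ K₂ v ≤ -K₂ * v := by
  have hbig : K₁ + K₂ ≤ (K₁ + K₂) / R * (v - R) := by
    rw [div_mul_eq_mul_div, le_div_iff₀ hR]; nlinarith
  rw [rateGamma_eq_mul_clamp hR hK, mul_comm]
  exact mul_le_mul_of_nonneg_right (max_le le_rfl (min_le_of_right_le (by linarith)))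
    (by linarith)

theorem antitoneOn_rateGamma_div (hR : 0 < R) (hK : 0 ≤ K₁ + K₂) :
    AntitoneOn (fun s => rateGamma R K₁ K₂ s / s) (Ioi 0) := by
  intro u hu s hs hus
  have hslope : 0 ≤ (K₁ + K₂) / R := div_nonneg hK hR.le
  simp only [rateGamma_eq_mul_clamp hR hK, mul_div_cancel_left₀ _ hu.out.ne',
    mul_div_cancel_left₀ _ hs.out.ne']
  refine max_le_max le_rfl (min_le_min le_rfl ?_)
  nlinarith [mul_le_mul_of_nonneg_left hus hslope]

end RateGamma

/-- Contraction differential inequality for the reflection-coupling Lyapunov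
function: for any `κ ≥ 0` and every `r ≥ 0`,
`f′(r) γ(r) + κ f′(r) r + 2β f″(r) ≤ −λ₀ f(r)` with
`λ₀ = 2β/δ − (K₂δ/(2β)) κ`. -/
theorem couplingF_contraction (β R K₁ K₂ : ℝ)
    (hβ : 0 < β) (hR : 0 < R) (hK₁ : 0 ≤ K₁) (hK₂ : 0 < K₂) :
    ∀ κ ≥ (0:ℝ), ∀ r ≥ (0:ℝ),
      deriv (couplingF β R K₁ K₂) r * rateGamma R K₁ K₂ r +
          κ * deriv (couplingF β R K₁ K₂) r * r +
          2 * β * deriv (deriv (couplingF β R K₁ K₂)) r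
        ≤ -(2 * β / deltaConst β R K₁ K₂ -
              (K₂ * deltaConst β R K₁ K₂ / (2 * β)) * κ) *
            couplingF β R K₁ K₂ r := by
  intro κ hκ r hr
  have hK : 0 ≤ K₁ + K₂ := by linarith
  set γ := rateGamma R K₁ K₂
  have hγ : Continuous γ := continuous_rateGamma hR hK
  have hdiss : ∀ v ≥ 2 * R, γ v ≤ -K₂ * v := fun v hv => rateGamma_le_neg_mul hR hK hv
  have hlow : ∀ v ≥ 0, -K₂ * v ≤ γ v := fun v hv => neg_mul_le_rateGamma hR hK hv
  have hratio := antitoneOn_rateGamma_div hR hK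
  have hf' : deriv (couplingF β R K₁ K₂) = couplingDeriv β γ := funext fun x =>
    ((continuous_couplingDeriv hγ hβ hK₂ hdiss).integral_hasStrictDerivAt 0 x).hasDerivAt.deriv
  rw [hf', (hasDerivAt_couplingDeriv hγ hβ hK₂ hdiss r).deriv]
  set δ := deltaConst β R K₁ K₂
  set F := couplingF β R K₁ K₂ r
  set g := couplingDeriv β γ r
  have hg : g ≤ δ := couplingDeriv_le_tailIntegral_zero hγ hβ hK₂ hdiss hratio hr
  have hF_le : F ≤ δ * r := integral_couplingDeriv_le hγ hβ hK₂ hdiss hratio hr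
  have hF_ge : 2 * β / K₂ * r ≤ F := mul_le_integral_couplingDeriv hγ hβ hK₂ hdiss hK₂ hlow hr
  have hδ : 0 < δ := (by positivity : 0 < 2 * β / K₂).trans_le <|
    (le_couplingDeriv hγ hβ hK₂ hdiss hK₂ hlow).trans_eq couplingDeriv_zero
  have hlhs : g * γ r + κ * g * r + 2 * β * (-(γ r * g) / (2 * β) - r) = κ * g * r - 2 * β * r := by
    field_simp
    ring
  have hdecay : 2 * β / δ * F ≤ 2 * β * r := by
    rw [div_mul_eq_mul_div, div_le_iff₀ hδ]
    nlinarith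
  have hgrowth : κ * g * r ≤ K₂ * δ / (2 * β) * κ * F := by
    rw [div_mul_eq_mul_div, div_mul_eq_mul_div, le_div_iff₀ (by positivity)]
    rw [div_mul_eq_mul_div, div_le_iff₀ hK₂] at hF_ge
    nlinarith [mul_le_mul_of_nonneg_right hg (by positivity : 0 ≤ κ * r * (2 * β)),
      mul_le_mul_of_nonneg_left hF_ge (mul_nonneg hκ hδ.le)]
  linarith
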